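/- Let T be a tree on n vertices and k ≥ 2 an integer. Then α_k(T) ≥ ((k−1)/k)·n, where α_k(T) is the maximum size of a vertex set S such that the induced subgraph T[S] contains no tree on k vertices. -/

import Mathlib

open SimpleGraph

/-- A set `S` is a generalized `k`-independent set in `G` if the induced subgraph `G[S]`
contains no tree on `k` vertices, equivalently every connected component of `G[S]`
has at most `k - 1` vertices. -/
def IsGenKIndep {V : Type*} (G : SimpleGraph V) (k : ℕ) (S : Set V) : Prop :=
  ∀ c : (G.induce S).ConnectedComponent, Nat.card c.supp ≤ k - 1

/-- The generalized `k`-independence number: the maximum size of a generalized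
`k`-independent set. -/
noncomputable def alphaK {V : Type*} (G : SimpleGraph V) (k : ℕ) : ℕ :=
  sSup {m | ∃ S : Set V, IsGenKIndep G k S ∧ S.ncard = m}

/-!
Peel off branches. Call `B ⊆ W` a branch of `W` at `v ∈ B` if, inside `W`, only `v` has
neighbours outside `B`. In a forest, a smallest branch `B` with at least `k` vertices has all
components of `B \ {v}` of size below `k`: each such component is again a branch, at its unique
neighbour of `v`. Keeping `B \ {v}` and recursing on `W \ B` loses one vertex out of every
`|B| ≥ k`, so at least a `(k - 1)/k` fraction of the vertices survives.
-/

namespace SimpleGraph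

variable {V : Type*} {G : SimpleGraph V}

-- Two edges from `v` into a connected set avoiding `v` would close a cycle.
theorem IsAcyclic.eq_of_adj_of_reachable_induce (hG : G.IsAcyclic) {S : Set V} {v : V}
    (hv : v ∉ S) {w w' : S} (hww' : (G.induce S).Reachable w w') (hw : G.Adj v w)
    (hw' : G.Adj v w') : w = w' := by
  classical
  obtain ⟨q⟩ := hww'
  have hvq : v ∉ (q.map (Embedding.induce S).toHom).bypass.support := fun h => by
    have := (q.map (Embedding.induce S).toHom).support_bypass_subset_support h
    simp only [Walk.support_map, List.mem_map] at this
    obtain ⟨x, -, rfl⟩ := this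
    exact hv x.2
  have hp := (Walk.bypass_isPath _).cons hvq (h := hw)
  have := hG.eq_snd_of_adj_start hp hw' (Walk.end_mem_support _)
  exact Subtype.ext (by simpa using this.symm)

theorem Walk.support_subset_of_closed {A S : Set V}
    (hA : ∀ x ∈ A, ∀ y ∈ S, G.Adj x y → y ∈ A) :
    ∀ {u v : V} (p : G.Walk u v), u ∈ A → (∀ x ∈ p.support, x ∈ S) → ∀ x ∈ p.support, x ∈ A
  | _, _, .nil, hu, _ => by simpa
  | _, _, .cons h p, hu, hS => by
    simp only [Walk.support_cons, List.mem_cons, forall_eq_or_imp] at hS ⊢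
    exact ⟨hu, support_subset_of_closed hA p (hA _ hu _ (hS.2 _ p.start_mem_support) h) hS.2⟩

namespace ConnectedComponent

variable {S : Set V} (c : (G.induce S).ConnectedComponent)

theorem ncard_image_val_supp : ((↑) '' c.supp : Set V).ncard = Nat.card c.supp := by
  rw [Set.ncard_image_of_injective _ Subtype.val_injective, Nat.card_coe_set_eq]

theorem mem_image_val_supp_of_adj {x y : V} (hx : x ∈ ((↑) '' c.supp : Set V)) (hy : y ∈ S)
    (hxy : G.Adj x y) : y ∈ ((↑) '' c.supp : Set V) := by
  obtain ⟨x, hxc, rfl⟩ := hx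
  exact ⟨⟨y, hy⟩, c.mem_supp_of_adj_mem_supp hxc hxy, rfl⟩

theorem card_supp_le_of_closed [Finite V] {A : Set V} (hAS : A ⊆ S)
    (hA : ∀ x ∈ A, ∀ y ∈ S, G.Adj x y → y ∈ A) {x : V} (hx : x ∈ A)
    (hxc : ⟨x, hAS hx⟩ ∈ c.supp) :
    Nat.card c.supp ≤ Nat.card ((G.induce A).connectedComponentMk ⟨x, hx⟩).supp := by
  have hmem : ∀ z ∈ c.supp, ∃ hz : (z : V) ∈ A,
      (⟨z, hz⟩ : A) ∈ ((G.induce A).connectedComponentMk ⟨x, hx⟩).supp := by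
    intro z hz
    obtain ⟨p⟩ := c.reachable_of_mem_supp hxc hz
    set q := p.map (Embedding.induce S).toHom
    have hqS : ∀ y ∈ q.support, y ∈ S := by
      simp only [q, Walk.support_map, List.mem_map]
      rintro _ ⟨y, -, rfl⟩
      exact y.2
    have hqA := Walk.support_subset_of_closed hA q hx hqS
    exact ⟨hqA z q.end_mem_support, ConnectedComponent.sound (q.induce A hqA).reachable.symm⟩
  refine Nat.card_le_card_of_injective (fun z => ⟨⟨z, (hmem z z.2).1⟩, (hmem z z.2).2⟩) ?_
  intro z z' h
  exact Subtype.ext (Subtype.ext (congrArg (fun y => (y.1 : V)) h))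

end ConnectedComponent

end SimpleGraph

section

variable {V : Type*} {G : SimpleGraph V} {k : ℕ}

theorem isGenKIndep_of_ncard_le [Finite V] {S : Set V} (h : S.ncard ≤ k - 1) :
    IsGenKIndep G k S :=
  fun _ => (Finite.card_subtype_le _).trans (by rwa [Nat.card_coe_set_eq])

theorem IsGenKIndep.union [Finite V] {A B : Set V} (hA : IsGenKIndep G k A)
    (hB : IsGenKIndep G k B) (hAB : ∀ x ∈ A, ∀ y ∈ B, ¬G.Adj x y) :
    IsGenKIndep G k (A ∪ B) := by
  intro c
  obtain ⟨⟨x, hx | hx⟩, hxc⟩ := c.nonempty_supp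
  · refine (c.card_supp_le_of_closed Set.subset_union_left ?_ hx hxc).trans (hA _)
    rintro a ha b (hb | hb) hab
    exacts [hb, absurd hab (hAB a ha b hb)]
  · refine (c.card_supp_le_of_closed Set.subset_union_right ?_ hx hxc).trans (hB _)
    rintro a ha b (hb | hb) hab
    exacts [absurd hab.symm (hAB b hb a ha), hb]

theorem IsGenKIndep.ncard_le_alphaK [Finite V] {S : Set V} (hS : IsGenKIndep G k S) :
    S.ncard ≤ alphaK G k :=
  le_csSup ⟨Nat.card V, by rintro _ ⟨S', -, rfl⟩; exact Set.ncard_le_card S'⟩ ⟨S, hS, rfl⟩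

-- In a forest rooted outside `B`, these are the subtrees: `B` is the subtree below `v`.
structure IsBranch (G : SimpleGraph V) (W : Set V) (v : V) (B : Set V) : Prop where
  mem : v ∈ B
  subset : B ⊆ W
  mem_of_adj : ∀ x ∈ B, x ≠ v → ∀ y ∈ W, G.Adj x y → y ∈ B

variable {W B : Set V} {v : V}

theorem isBranch_self (hv : v ∈ W) : IsBranch G W v W :=
  ⟨hv, subset_rfl, fun _ _ _ _ hy _ => hy⟩

-- The new root is the unique neighbour of `v` in the component, or any vertex if there is none.
theorem IsBranch.exists_isBranch_component (hG : G.IsAcyclic) (hB : IsBranch G W v B)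
    (c : (G.induce (B \ {v})).ConnectedComponent) :
    ∃ w, IsBranch G W w ((↑) '' c.supp) := by
  have hDB : ((↑) '' c.supp : Set V) ⊆ B \ {v} := Subtype.coe_image_subset _ _
  obtain ⟨w, hwD, hw⟩ : ∃ w ∈ ((↑) '' c.supp : Set V),
      ∀ y ∈ ((↑) '' c.supp : Set V), G.Adj y v → y = w := by
    by_cases h : ∃ w ∈ ((↑) '' c.supp : Set V), G.Adj w v
    · obtain ⟨_, ⟨w, hwc, rfl⟩, hwv⟩ := h
      refine ⟨w, ⟨w, hwc, rfl⟩, ?_⟩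
      rintro _ ⟨y, hyc, rfl⟩ hyv
      exact congrArg Subtype.val (hG.eq_of_adj_of_reachable_induce (fun h => h.2 rfl)
        (c.reachable_of_mem_supp hwc hyc) hwv.symm hyv.symm).symm
    · push Not at h
      obtain ⟨w, hwc⟩ := c.nonempty_supp
      exact ⟨w, ⟨w, hwc, rfl⟩, fun y hy hyv => absurd hyv (h y hy)⟩
  refine ⟨w, hwD, hDB.trans (Set.sdiff_subset.trans hB.subset), fun x hx hxw y hyW hxy => ?_⟩
  have hyB := hB.mem_of_adj x (hDB hx).1 (hDB hx).2 y hyW hxy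
  obtain rfl | hyv := eq_or_ne y v
  · exact absurd (hw x hx hxy) hxw
  · exact c.mem_image_val_supp_of_adj hx ⟨hyB, hyv⟩ hxy

theorem IsBranch.exists_isGenKIndep_sdiff [Finite V] (hG : G.IsAcyclic) (hB : IsBranch G W v B)
    (hk : k ≤ B.ncard) : ∃ w D, IsBranch G W w D ∧ k ≤ D.ncard ∧ IsGenKIndep G k (D \ {w}) := by
  induction hn : B.ncard using Nat.strong_induction_on generalizing v B with
  | _ n ih =>
  by_cases hind : IsGenKIndep G k (B \ {v})
  · exact ⟨v, B, hB, hk, hind⟩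
  obtain ⟨c, hc⟩ : ∃ c : (G.induce (B \ {v})).ConnectedComponent, k - 1 < Nat.card c.supp := by
    simpa [IsGenKIndep] using hind
  obtain ⟨w, hw⟩ := hB.exists_isBranch_component hG c
  have hlt : ((↑) '' c.supp : Set V).ncard < B.ncard :=
    Set.ncard_lt_ncard ((Subtype.coe_image_subset _ _).trans_ssubset
      (Set.sdiff_singleton_ssubset.2 hB.mem))
  exact ih _ (hn ▸ hlt) hw (by rw [c.ncard_image_val_supp]; omega) rfl

theorem SimpleGraph.IsAcyclic.exists_isGenKIndep_subset [Finite V] (hG : G.IsAcyclic) (k : ℕ)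
    (W : Set V) : ∃ S ⊆ W, IsGenKIndep G k S ∧ (k - 1) * W.ncard ≤ k * S.ncard := by
  by_cases hW : W.ncard ≤ k - 1
  · exact ⟨W, subset_rfl, isGenKIndep_of_ncard_le hW, Nat.mul_le_mul_right _ (Nat.sub_le k 1)⟩
  obtain ⟨v, hv⟩ : W.Nonempty := Set.nonempty_of_ncard_ne_zero (s := W) (by omega)
  obtain ⟨w, B, hB, hkB, hind⟩ :=
    (isBranch_self (G := G) hv).exists_isGenKIndep_sdiff (k := k) hG (by omega)
  have hlt : (W \ B).ncard < W.ncard :=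
    Set.ncard_lt_ncard (Set.sdiff_ssubset_left_iff.2 ⟨w, hB.subset hB.mem, hB.mem⟩)
  obtain ⟨S, hSW, hS, hcard⟩ := hG.exists_isGenKIndep_subset k (W \ B)
  refine ⟨S ∪ B \ {w}, Set.union_subset (hSW.trans Set.sdiff_subset)
    (Set.sdiff_subset.trans hB.subset), hS.union hind ?_, ?_⟩
  · rintro x hx y ⟨hyB, hyw⟩ hxy
    exact (hSW hx).2 (hB.mem_of_adj y hyB hyw x (hSW hx).1 hxy.symm)
  · have hdisj : Disjoint S (B \ {w}) :=
      Set.disjoint_left.2 fun x hx hxB => (hSW hx).2 hxB.1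
    rw [Set.ncard_union_eq hdisj, Set.ncard_sdiff_singleton_of_mem hB.mem]
    rw [Set.ncard_sdiff hB.subset] at hcard
    rcases Nat.eq_zero_or_pos k with rfl | hk
    · simp
    zify [hk, hk.trans_le hkB, Set.ncard_le_ncard hB.subset] at hcard hkB ⊢
    nlinarith
termination_by W.ncard

end

theorem alphaK_tree_lower_bound_general {V : Type*} [Fintype V] (T : SimpleGraph V)
    (hT : T.IsTree) (k : ℕ) :
    ((k : ℚ) - 1) / k * (Nat.card V) ≤ alphaK T k := by
  rcases Nat.eq_zero_or_pos k with rfl | hk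
  · simp
  obtain ⟨S, -, hS, hcard⟩ := hT.isAcyclic.exists_isGenKIndep_subset k Set.univ
  rw [Set.ncard_univ] at hcard
  have hcardℚ : ((k : ℚ) - 1) * Nat.card V ≤ k * S.ncard := by
    have := (Nat.cast_le (α := ℚ)).2 hcard
    push_cast [Nat.cast_sub hk] at this
    exact this
  calc ((k : ℚ) - 1) / k * Nat.card V ≤ S.ncard := by
        rw [div_mul_eq_mul_div, div_le_iff₀ (by positivity)]
        linarith
    _ ≤ alphaK T k := by exact_mod_cast hS.ncard_le_alphaK

/-- For every tree `T` on `n` vertices and every integer `k ≥ 2`,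
`α_k(T) ≥ ((k-1)/k)·n`. -/
theorem alphaK_tree_lower_bound {V : Type*} [Fintype V] (T : SimpleGraph V)
    (hT : T.IsTree) (k : ℕ) (hk : 2 ≤ k) :
    ((k : ℚ) - 1) / k * (Nat.card V) ≤ alphaK T k :=
  alphaK_tree_lower_bound_general T hT k
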